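/- With f_{σ,ω} = Σ_{ω'⊆ω∖σ} (−2)^{|ω'|} u_σ t_{ω'} ∈ R_K and the differential d on R_K (d t_i = u_i, d u_i = 0, Leibniz), the map φ_ω: C̃*(K_ω) → R(K,Λ) defined by σ* ↦ (−1)^{|σ|} f_{σ,ω} is a chain map when C̃*(K_ω) is given the doubled coboundary 2δ; that is, φ_ω(2δ(σ*)) = d(φ_ω(σ*)) for every face σ ∈ K_ω. -/

import Mathlib

open Finset
open scoped Classical

noncomputable section

abbrev FA (m : ℕ) := FreeAlgebra ℤ (Fin m ⊕ Fin m)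

def uf (m : ℕ) (i : Fin m) : FA m := FreeAlgebra.ι ℤ (Sum.inl i)
def tf (m : ℕ) (i : Fin m) : FA m := FreeAlgebra.ι ℤ (Sum.inr i)

def ufProd (m : ℕ) (σ : Finset (Fin m)) : FA m :=
  ((σ.sort (· ≤ ·)).map (uf m)).prod

/-- The defining relations of the DGA `R_K`. -/
inductive RKRel (m : ℕ) (K : Finset (Fin m) → Prop) : FA m → FA m → Prop
  | ut_same (i : Fin m) : RKRel m K (uf m i * tf m i) (uf m i)
  | tu_same (i : Fin m) : RKRel m K (tf m i * uf m i) 0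
  | ut_comm {i j : Fin m} (h : i ≠ j) : RKRel m K (uf m i * tf m j) (tf m j * uf m i)
  | tt_same (i : Fin m) : RKRel m K (tf m i * tf m i) (tf m i)
  | uu_same (i : Fin m) : RKRel m K (uf m i * uf m i) 0
  | uu_anti {i j : Fin m} (h : i ≠ j) : RKRel m K (uf m i * uf m j) (-(uf m j * uf m i))
  | tt_comm (i j : Fin m) : RKRel m K (tf m i * tf m j) (tf m j * tf m i)
  | notface (σ : Finset (Fin m)) (h : ¬ K σ) : RKRel m K (ufProd m σ) 0

abbrev RK (m : ℕ) (K : Finset (Fin m) → Prop) := RingQuot (RKRel m K)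

def uqK (m : ℕ) (K : Finset (Fin m) → Prop) (i : Fin m) : RK m K :=
  RingQuot.mkRingHom (RKRel m K) (uf m i)
def tqK (m : ℕ) (K : Finset (Fin m) → Prop) (i : Fin m) : RK m K :=
  RingQuot.mkRingHom (RKRel m K) (tf m i)

def uProdK (m : ℕ) (K : Finset (Fin m) → Prop) (σ : Finset (Fin m)) : RK m K :=
  ((σ.sort (· ≤ ·)).map (uqK m K)).prod
def tProdK (m : ℕ) (K : Finset (Fin m) → Prop) (τ : Finset (Fin m)) : RK m K :=
  ((τ.sort (· ≤ ·)).map (tqK m K)).prod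

/-- `f_{σ,ω} = Σ_{ω' ⊆ ω∖σ} (−2)^{|ω'|} u_σ t_{ω'} ∈ R_K`. -/
def fEl (m : ℕ) (K : Finset (Fin m) → Prop) (σ ω : Finset (Fin m)) : RK m K :=
  ∑ ω' ∈ (ω \ σ).powerset, (-2 : ℤ) ^ ω'.card • (uProdK m K σ * tProdK m K ω')

/-- The span of the monomials `u_σ t_τ` with `|σ| = k`: the degree-`k` part of `R_K`. -/
def degreePart (m : ℕ) (K : Finset (Fin m) → Prop) (k : ℕ) : Submodule ℤ (RK m K) :=
  Submodule.span ℤ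
    {z | ∃ σ τ : Finset (Fin m), σ.card = k ∧ z = uProdK m K σ * tProdK m K τ}

/-!
By the Leibniz rule and `d u_i = 0`, `d (u_σ t_A) = (-1)^|σ| u_σ d(t_A) =
(-1)^|σ| Σ_{v ∈ A} u_σ u_v t_{A∖v}`. Moving `u_v` to its place in `u_{σ ∪ v}` costs
`(-1)^#{x ∈ σ | v < x}`, which together with `(-1)^|σ|` gives the coboundary sign
`(-1)^#{x ∈ σ | x < v}`. Reindexing the pairs `v ∈ A ⊆ ω ∖ σ` by `v ∈ ω ∖ σ`,
`B = A ∖ v ⊆ ω ∖ (σ ∪ v)` turns `(-2)^|A|` into `-2 · (-2)^|B|`, so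
`d f_{σ,ω} = -2 Σ_v (-1)^#{x ∈ σ | x < v} f_{σ ∪ v, ω}`; the terms with `σ ∪ v ∉ K` vanish
because then `u_{σ ∪ v} = 0`.
-/

theorem Finset.zsmul_sum {ι M : Type*} [AddCommGroup M] (z : ℤ) (s : Finset ι) (f : ι → M) :
    z • ∑ i ∈ s, f i = ∑ i ∈ s, z • f i :=
  map_sum (zsmulAddGroupHom z) f s

theorem Finset.sort_insert_eq_orderedInsert {α : Type*} [LinearOrder α] {s : Finset α} {a : α}
    (h : a ∉ s) :
    (insert a s).sort (· ≤ ·) = (s.sort (· ≤ ·)).orderedInsert (· ≤ ·) a := by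
  refine List.Perm.eq_of_pairwise' (Finset.pairwise_sort _ _)
    ((Finset.pairwise_sort _ _).orderedInsert _ _) ?_
  refine List.Perm.trans ?_ (List.perm_orderedInsert _ _ _).symm
  rw [← Multiset.coe_eq_coe, ← Multiset.cons_coe, Finset.sort_eq, Finset.sort_eq,
    Finset.insert_val_of_notMem h]

theorem Finset.sort_erase {α : Type*} [LinearOrder α] (s : Finset α) (a : α) :
    (s.erase a).sort (· ≤ ·) = (s.sort (· ≤ ·)).erase a := by
  refine List.Perm.eq_of_pairwise' (Finset.pairwise_sort _ _)
    ((Finset.pairwise_sort _ _).erase _) ?_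
  rw [← Multiset.coe_eq_coe, ← Multiset.coe_erase, Finset.sort_eq, Finset.sort_eq,
    Finset.erase_val]

theorem Finset.length_filter_sort {α : Type*} [LinearOrder α] (s : Finset α) (p : α → Prop)
    [DecidablePred p] : ((s.sort (· ≤ ·)).filter p).length = (s.filter p).card := by
  rw [Finset.card, Finset.filter_val, ← Finset.sort_eq s (· ≤ ·), Multiset.filter_coe]
  simp

theorem Finset.neg_one_pow_card_mul_neg_one_pow_card_filter_gt {α : Type*} [LinearOrder α]
    {σ : Finset α} {v : α} (h : v ∉ σ) :
    (-1 : ℤ) ^ σ.card * (-1 : ℤ) ^ (σ.filter (v < ·)).card = (-1) ^ (σ.filter (· < v)).card := by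
  have hgt : σ.filter (v < ·) = σ.filter (¬· < v) :=
    Finset.filter_congr fun x hx => by
      rw [not_lt, lt_iff_le_and_ne, and_iff_left (ne_of_mem_of_not_mem hx h).symm]
  rw [← Finset.card_filter_add_card_filter_not (· < v) (s := σ), ← hgt, ← pow_add, add_assoc,
    pow_add, Even.neg_one_pow ⟨_, rfl⟩, mul_one]

theorem Finset.sum_powerset_sum_eq_sum_sum_powerset_erase {α M : Type*} [DecidableEq α]
    [AddCommMonoid M] (S : Finset α) (F : Finset α → α → M) :
    ∑ A ∈ S.powerset, ∑ v ∈ A, F A v = ∑ v ∈ S, ∑ B ∈ (S.erase v).powerset, F (insert v B) v := by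
  rw [Finset.sum_comm' (t' := S) (s' := fun v => (S.erase v).powerset.image (insert v))]
  · refine Finset.sum_congr rfl fun v _ => Finset.sum_image fun B hB C hC hBC => ?_
    have hvB : v ∉ B := fun h => Finset.notMem_erase v S (Finset.mem_powerset.1 hB h)
    have hvC : v ∉ C := fun h => Finset.notMem_erase v S (Finset.mem_powerset.1 hC h)
    rw [← Finset.erase_insert hvB, ← Finset.erase_insert hvC]
    exact congrArg (·.erase v) hBC
  · intro A v
    simp only [Finset.mem_powerset, Finset.mem_image]
    constructor
    · rintro ⟨hA, hv⟩
      exact ⟨⟨A.erase v, Finset.erase_subset_erase v hA, Finset.insert_erase hv⟩, hA hv⟩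
    · rintro ⟨⟨B, hB, rfl⟩, hv⟩
      exact ⟨Finset.insert_subset hv (hB.trans (Finset.erase_subset v S)),
        Finset.mem_insert_self v B⟩

section Anticommute

variable {ι R : Type*} [Ring R] {u : ι → R} {v : ι}

theorem List.prod_map_mul_of_anticomm (hu : ∀ x, x ≠ v → u x * u v = -(u v * u x)) :
    ∀ {l : List ι}, v ∉ l → (l.map u).prod * u v = (-1 : ℤ) ^ l.length • (u v * (l.map u).prod)
  | [], _ => by simp
  | x :: l, hv => by
    rw [List.mem_cons, not_or] at hv
    rw [List.map_cons, List.prod_cons, mul_assoc, prod_map_mul_of_anticomm hu hv.2,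
      mul_smul_comm, ← mul_assoc, hu x (Ne.symm hv.1), neg_mul, mul_assoc, smul_neg,
      List.length_cons, pow_succ, mul_neg_one, neg_smul]

theorem List.prod_map_mul_eq_orderedInsert [LinearOrder ι]
    (hu : ∀ x, x ≠ v → u x * u v = -(u v * u x)) :
    ∀ {l : List ι}, l.Pairwise (· ≤ ·) → v ∉ l →
      (l.map u).prod * u v =
        (-1 : ℤ) ^ (l.filter (v < ·)).length • ((l.orderedInsert (· ≤ ·) v).map u).prod
  | [], _, _ => by simp
  | x :: l, hl, hv => by
    rw [List.pairwise_cons] at hl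
    rw [List.mem_cons, not_or] at hv
    by_cases hvx : v ≤ x
    · have hgt : ∀ y ∈ x :: l, v < y := by
        simp only [List.mem_cons, forall_eq_or_imp]
        exact ⟨lt_of_le_of_ne hvx hv.1, fun y hy =>
          lt_of_le_of_ne (hvx.trans (hl.1 y hy)) fun h => hv.2 (h ▸ hy)⟩
      rw [List.filter_eq_self.2 (by simpa using hgt), List.orderedInsert_cons_of_le _ _ hvx,
        prod_map_mul_of_anticomm hu (fun h => (hgt v h).false)]
      simp only [List.map_cons, List.prod_cons]
    · rw [List.filter_cons_of_neg (by simpa using hvx.imp le_of_lt), List.orderedInsert_cons,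
        if_neg hvx, List.map_cons, List.prod_cons, List.map_cons, List.prod_cons, mul_assoc,
        prod_map_mul_eq_orderedInsert hu hl.2 hv.2, mul_smul_comm]

end Anticommute

namespace RK

variable {m : ℕ} {K : Finset (Fin m) → Prop}

theorem uqK_mul_uqK_of_ne {i j : Fin m} (h : i ≠ j) :
    uqK m K i * uqK m K j = -(uqK m K j * uqK m K i) := by
  rw [uqK, uqK, ← map_mul, ← map_mul, ← map_neg]
  exact RingQuot.mkRingHom_rel (RKRel.uu_anti h)

theorem commute_uqK_tqK {i j : Fin m} (h : i ≠ j) : Commute (uqK m K i) (tqK m K j) := by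
  rw [Commute, SemiconjBy, uqK, tqK, ← map_mul, ← map_mul]
  exact RingQuot.mkRingHom_rel (RKRel.ut_comm h)

theorem uProdK_eq_zero {σ : Finset (Fin m)} (h : ¬K σ) : uProdK m K σ = 0 := by
  have hσ : RingQuot.mkRingHom (RKRel m K) (ufProd m σ) = uProdK m K σ := by
    rw [ufProd, uProdK, map_list_prod, List.map_map]
    rfl
  simpa only [hσ, map_zero] using RingQuot.mkRingHom_rel (RKRel.notface (K := K) σ h)

theorem uProdK_mul_uqK {σ : Finset (Fin m)} {v : Fin m} (h : v ∉ σ) :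
    uProdK m K σ * uqK m K v = (-1 : ℤ) ^ (σ.filter (v < ·)).card • uProdK m K (insert v σ) := by
  rw [uProdK, uProdK, Finset.sort_insert_eq_orderedInsert h, ← Finset.length_filter_sort]
  exact List.prod_map_mul_eq_orderedInsert (fun x hx => uqK_mul_uqK_of_ne hx)
    (Finset.pairwise_sort _ _) (by simpa using h)

theorem uProdK_mul_tProdK_mem_degreePart (σ τ : Finset (Fin m)) :
    uProdK m K σ * tProdK m K τ ∈ degreePart m K σ.card :=
  Submodule.subset_span ⟨σ, τ, rfl, rfl⟩

theorem uProdK_mem_degreePart (σ : Finset (Fin m)) : uProdK m K σ ∈ degreePart m K σ.card := by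
  simpa [tProdK] using uProdK_mul_tProdK_mem_degreePart (K := K) σ ∅

theorem uqK_mem_degreePart (i : Fin m) : uqK m K i ∈ degreePart m K 1 := by
  simpa [uProdK] using uProdK_mem_degreePart (K := K) {i}

theorem tqK_mem_degreePart (i : Fin m) : tqK m K i ∈ degreePart m K 0 := by
  simpa [uProdK, tProdK] using uProdK_mul_tProdK_mem_degreePart (K := K) ∅ {i}

def IsGradedDerivation (d : RK m K →+ RK m K) : Prop :=
  ∀ (k : ℕ) (x y : RK m K), x ∈ degreePart m K k → d (x * y) = d x * y + (-1 : ℤ) ^ k • (x * d y)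

variable {d : RK m K →+ RK m K}

theorem IsGradedDerivation.map_one (hd : IsGradedDerivation d) : d 1 = 0 := by
  have h := hd 0 1 1 (by simpa [uProdK] using uProdK_mem_degreePart (K := K) ∅)
  simpa using h

theorem IsGradedDerivation.map_uProdK (hd : IsGradedDerivation d)
    (hd_u : ∀ i, d (uqK m K i) = 0) (σ : Finset (Fin m)) : d (uProdK m K σ) = 0 := by
  rw [uProdK]
  induction σ.sort (· ≤ ·) with
  | nil => exact hd.map_one
  | cons x l ih =>
    rw [List.map_cons, List.prod_cons, hd 1 _ _ (uqK_mem_degreePart x), hd_u, ih, zero_mul,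
      mul_zero, zsmul_zero, add_zero]

theorem IsGradedDerivation.map_prod_map_tqK (hd : IsGradedDerivation d)
    (hd_t : ∀ i, d (tqK m K i) = uqK m K i) {l : List (Fin m)} (hl : l.Nodup) :
    d (l.map (tqK m K)).prod =
      (l.map fun v => uqK m K v * ((l.erase v).map (tqK m K)).prod).sum := by
  induction l with
  | nil => simpa using hd.map_one
  | cons x l ih =>
    rw [List.nodup_cons] at hl
    rw [List.map_cons, List.prod_cons, hd 0 _ _ (tqK_mem_degreePart x), hd_t, pow_zero, one_smul,
      ih hl.2, List.map_cons, List.sum_cons, List.erase_cons_head, ← List.sum_map_mul_left]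
    congr 1
    refine congrArg List.sum (List.map_congr_left fun w hw => ?_)
    have hwx : w ≠ x := ne_of_mem_of_not_mem hw hl.1
    rw [List.erase_cons_tail (by simpa using hwx.symm), List.map_cons, List.prod_cons,
      ← mul_assoc, ← (commute_uqK_tqK hwx).eq, mul_assoc]

theorem IsGradedDerivation.map_tProdK (hd : IsGradedDerivation d)
    (hd_t : ∀ i, d (tqK m K i) = uqK m K i) (τ : Finset (Fin m)) :
    d (tProdK m K τ) = ∑ v ∈ τ, uqK m K v * tProdK m K (τ.erase v) := by
  rw [tProdK, hd.map_prod_map_tqK hd_t (Finset.sort_nodup _ _), Finset.sum,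
    ← Finset.sort_eq τ (· ≤ ·), Multiset.map_coe, Multiset.sum_coe]
  simp only [tProdK, Finset.sort_erase]

theorem IsGradedDerivation.map_uProdK_mul_tProdK (hd : IsGradedDerivation d)
    (hd_t : ∀ i, d (tqK m K i) = uqK m K i) (hd_u : ∀ i, d (uqK m K i) = 0)
    {σ τ : Finset (Fin m)} (h : Disjoint σ τ) :
    d (uProdK m K σ * tProdK m K τ) =
      ∑ v ∈ τ, (-1 : ℤ) ^ (σ.filter (· < v)).card •
        (uProdK m K (insert v σ) * tProdK m K (τ.erase v)) := by
  rw [hd _ _ _ (uProdK_mem_degreePart σ), hd.map_uProdK hd_u, zero_mul, zero_add,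
    hd.map_tProdK hd_t, Finset.mul_sum, Finset.zsmul_sum]
  refine Finset.sum_congr rfl fun v hv => ?_
  have hvσ : v ∉ σ := Finset.disjoint_right.1 h hv
  rw [← mul_assoc, uProdK_mul_uqK hvσ, smul_mul_assoc, smul_smul,
    Finset.neg_one_pow_card_mul_neg_one_pow_card_filter_gt hvσ]

theorem fEl_eq_zero {σ : Finset (Fin m)} (h : ¬K σ) (ω : Finset (Fin m)) : fEl m K σ ω = 0 := by
  simp only [fEl, uProdK_eq_zero h, zero_mul, zsmul_zero, Finset.sum_const_zero]

theorem IsGradedDerivation.map_fEl (hd : IsGradedDerivation d)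
    (hd_t : ∀ i, d (tqK m K i) = uqK m K i) (hd_u : ∀ i, d (uqK m K i) = 0)
    (σ ω : Finset (Fin m)) :
    d (fEl m K σ ω) =
      ∑ v ∈ ω \ σ, (-2 * (-1) ^ (σ.filter (· < v)).card : ℤ) • fEl m K (insert v σ) ω := by
  calc d (fEl m K σ ω)
      = ∑ A ∈ (ω \ σ).powerset, ∑ v ∈ A,
          ((-2 : ℤ) ^ A.card * (-1) ^ (σ.filter (· < v)).card) •
            (uProdK m K (insert v σ) * tProdK m K (A.erase v)) := by
        rw [fEl, map_sum]
        refine Finset.sum_congr rfl fun A hA => ?_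
        have hσA : Disjoint σ A := Finset.disjoint_sdiff.mono_right (Finset.mem_powerset.1 hA)
        simp only [map_zsmul, hd.map_uProdK_mul_tProdK hd_t hd_u hσA, Finset.zsmul_sum,
          smul_smul]
    _ = ∑ v ∈ ω \ σ, ∑ B ∈ ((ω \ σ).erase v).powerset,
          ((-2 : ℤ) ^ (B.card + 1) * (-1) ^ (σ.filter (· < v)).card) •
            (uProdK m K (insert v σ) * tProdK m K B) := by
        rw [Finset.sum_powerset_sum_eq_sum_sum_powerset_erase]
        refine Finset.sum_congr rfl fun v _ => Finset.sum_congr rfl fun B hB => ?_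
        have hvB : v ∉ B := fun h => Finset.notMem_erase v _ (Finset.mem_powerset.1 hB h)
        rw [Finset.erase_insert hvB, Finset.card_insert_of_notMem hvB]
    _ = _ := by
        refine Finset.sum_congr rfl fun v _ => ?_
        rw [fEl, Finset.sdiff_insert, Finset.zsmul_sum]
        refine Finset.sum_congr rfl fun B _ => ?_
        rw [smul_smul]
        congr 1
        ring

end RK

theorem phi_omega_chain_map_general (m : ℕ)
    (K : Finset (Fin m) → Prop)
    (d : RK m K →+ RK m K)
    (hd_t : ∀ i, d (tqK m K i) = uqK m K i)
    (hd_u : ∀ i, d (uqK m K i) = 0)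
    (hd_leibniz : ∀ (k : ℕ) (x y : RK m K), x ∈ degreePart m K k →
      d (x * y) = d x * y + (-1 : ℤ) ^ k • (x * d y))
    (ω : Finset (Fin m)) (σ : Finset (Fin m)) :
    d ((-1 : ℤ) ^ σ.card • fEl m K σ ω) =
      ∑ v ∈ ω \ σ,
        (if K (insert v σ) then
          (2 * (-1 : ℤ) ^ ((σ.filter (· < v)).card) * (-1 : ℤ) ^ (σ.card + 1)) •
            fEl m K (insert v σ) ω
        else 0) := by
  rw [map_zsmul, RK.IsGradedDerivation.map_fEl hd_leibniz hd_t hd_u, Finset.zsmul_sum]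
  refine Finset.sum_congr rfl fun v _ => ?_
  split_ifs with hface
  · rw [smul_smul]
    congr 1
    ring
  · rw [RK.fEl_eq_zero hface, zsmul_zero, zsmul_zero]

/-- Lemma 3.3, second part: the map
`φ_ω : C̃*(K_ω) → R(K,Λ)`, `σ* ↦ (−1)^{|σ|} f_{σ,ω}` is a chain map with respect to the
doubled simplicial coboundary `2δ` on the source and the differential `d` of `R_K`
(`d t_i = u_i`, `d u_i = 0`, extended by the graded Leibniz rule) on the target:
`d((−1)^{|σ|} f_{σ,ω}) = φ_ω(2 δ σ*)` for every face `σ ∈ K_ω`. -/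
theorem phi_omega_chain_map (m : ℕ)
    (K : Finset (Fin m) → Prop)
    (hK : ∀ σ τ, K σ → τ ⊆ σ → K τ)
    (d : RK m K →+ RK m K)
    (hd_t : ∀ i, d (tqK m K i) = uqK m K i)
    (hd_u : ∀ i, d (uqK m K i) = 0)
    (hd_leibniz : ∀ (k : ℕ) (x y : RK m K), x ∈ degreePart m K k →
      d (x * y) = d x * y + (-1 : ℤ) ^ k • (x * d y))
    (ω : Finset (Fin m)) (σ : Finset (Fin m)) (hσ : K σ) (hσω : σ ⊆ ω) :
    d ((-1 : ℤ) ^ σ.card • fEl m K σ ω) =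
      ∑ v ∈ ω \ σ,
        (if K (insert v σ) then
          (2 * (-1 : ℤ) ^ ((σ.filter (· < v)).card) * (-1 : ℤ) ^ (σ.card + 1)) •
            fEl m K (insert v σ) ω
        else 0) :=
  phi_omega_chain_map_general m K d hd_t hd_u hd_leibniz ω σ
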